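/- In the group G = F_2^{n-1} ⋊_φ D_{2n} with generators ρ_0 = (0,h_0), ρ_1 = (0,h_1), ρ_2 = ((0,...,0,1)^T, h_0), there exists an involutory group automorphism δ of G with δ(ρ_0) = ρ_2, δ(ρ_1) = ρ_1, and δ(ρ_2) = ρ_0; hence the associated regular 3-polytope is self-dual. -/

import Mathlib

open Matrix DihedralGroup

/-- The matrix `U` of Lemma 3: (0-indexed) row `i` has a 1 at column `n-3-i` for
`i ≤ n-3`, and the last row is all ones. -/
def Umat (n : ℕ) : Matrix (Fin (n-1)) (Fin (n-1)) (ZMod 2) :=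
  Matrix.of fun i j =>
    if (i : ℕ) = n - 2 then 1 else if (i : ℕ) + (j : ℕ) = n - 3 then 1 else 0

/-- The anti-diagonal permutation matrix `V` of Lemma 3. -/
def Vmat (n : ℕ) : Matrix (Fin (n-1)) (Fin (n-1)) (ZMod 2) :=
  Matrix.of fun i j => if (i : ℕ) + (j : ℕ) = n - 2 then 1 else 0

/-- u = (0,…,0,1)ᵀ ∈ F₂^{n-1}. -/
def uVec (n : ℕ) : Fin (n-1) → ZMod 2 := fun i => if (i : ℕ) = n - 2 then 1 else 0

/-- v = Vu = (1,0,…,0)ᵀ ∈ F₂^{n-1}. -/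
def vVec (n : ℕ) : Fin (n-1) → ZMod 2 := fun i => if (i : ℕ) = 0 then 1 else 0

/-- The multiplicative group structure that `AddAut A` carried in the older Mathlib. -/
instance AddAut.oldMulGroup (A : Type*) [Add A] : Group (AddAut A) where
  mul g h := AddEquiv.trans h g
  one := AddEquiv.refl _
  inv := AddEquiv.symm
  mul_assoc _ _ _ := rfl
  one_mul _ := rfl
  mul_one _ := rfl
  inv_mul_cancel := AddEquiv.self_trans_symm

@[simp]
theorem AddAut.oldMulGroup_one_apply {A : Type*} [Add A] (a : A) : (1 : AddAut A) a = a :=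
  rfl

@[simp]
theorem AddAut.oldMulGroup_mul_apply {A : Type*} [Add A] (e₁ e₂ : AddAut A) (a : A) :
    (e₁ * e₂) a = e₁ (e₂ a) :=
  rfl

/-- The action of `D_{2n}` on `F₂^{n-1}` (written multiplicatively) induced by a
representation `φ : D_{2n} → Aut(F₂^{n-1})`. -/
def dihAct (n : ℕ) (φ : DihedralGroup n →* AddAut (Fin (n-1) → ZMod 2)) :
    DihedralGroup n →* MulAut (Multiplicative (Fin (n-1) → ZMod 2)) where
  toFun x := AddEquiv.toMultiplicative (φ x)
  map_one' := by ext w; simp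
  map_mul' x y := by ext w; simp

/-- The semidirect product `G = F₂^{n-1} ⋊_φ D_{2n}`. -/
abbrev Gsd (n : ℕ) (φ : DihedralGroup n →* AddAut (Fin (n-1) → ZMod 2)) :=
  Multiplicative (Fin (n-1) → ZMod 2) ⋊[dihAct n φ] DihedralGroup n

/-- `ρ₀ = (0, h₀)`, where `h₀ = sr 0`. -/
def rho0 (n : ℕ) (φ : DihedralGroup n →* AddAut (Fin (n-1) → ZMod 2)) : Gsd n φ :=
  ⟨Multiplicative.ofAdd 0, sr 0⟩

/-- `ρ₁ = (0, h₁)`, where `h₁ = sr 1`. -/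
def rho1 (n : ℕ) (φ : DihedralGroup n →* AddAut (Fin (n-1) → ZMod 2)) : Gsd n φ :=
  ⟨Multiplicative.ofAdd 0, sr 1⟩

/-- `ρ₂ = (u, h₀)`, where `u = (0,…,0,1)ᵀ`. -/
def rho2 (n : ℕ) (φ : DihedralGroup n →* AddAut (Fin (n-1) → ZMod 2)) : Gsd n φ :=
  ⟨Multiplicative.ofAdd (uVec n), sr 0⟩

/-!
`φ` is the representation on the sum-zero submodule of the permutation module `F₂^{ℤ/n}`,
for the action `σ` of `D_{2n}` on `ℤ/n` in which `r k` is `t ↦ t - k` and `sr k` is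
`t ↦ k - 3 - t`; the vector `eVec n t` plays the role of `e_t - e_{-1}`. Hence
`c g = σ g · e_{-1} - e_{-1}` is a 1-cocycle with values in `F₂^{n-1}`, and
`(a, x) ↦ (a + c x, x)` is an automorphism of the semidirect product, an involution because
`2c = 0`. It fixes `ρ₁` since `sr 1` fixes `-1`, and swaps `ρ₀` and `ρ₂` since
`c (sr 0) = e_{-2} - e_{-1} = u`.
-/

namespace SemidirectProduct

variable {N G : Type*} [CommGroup N] [Group G] {ψ : G →* MulAut N}

def twistAut (c : G → N) (hc : ∀ x y, c (x * y) = c x * ψ x (c y)) : MulAut (N ⋊[ψ] G) where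
  toFun g := ⟨g.left * c g.right, g.right⟩
  invFun g := ⟨g.left * (c g.right)⁻¹, g.right⟩
  left_inv g := by ext <;> simp
  right_inv g := by ext <;> simp
  map_mul' g h := by
    ext
    · simp only [SemidirectProduct.mul_left, SemidirectProduct.mul_right, hc, map_mul]
      ac_rfl
    · rfl

@[simp]
lemma twistAut_apply (c : G → N) (hc : ∀ x y, c (x * y) = c x * ψ x (c y)) (g : N ⋊[ψ] G) :
    twistAut c hc g = ⟨g.left * c g.right, g.right⟩ :=
  rfl

lemma twistAut_mul_self (c : G → N) (hc : ∀ x y, c (x * y) = c x * ψ x (c y))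
    (hc2 : ∀ x, c x * c x = 1) : twistAut c hc * twistAut c hc = 1 := by
  ext g
  · simp [mul_assoc, hc2]
  · rfl

end SemidirectProduct

section PermutationModule

variable {G X V : Type*} [Group G] [AddCommGroup V]
  (σ : G →* Equiv.Perm X) (φ : G →* AddAut V) (e : X → V) (p : X)

lemma apply_eq_sub_of_closure_eq_top (hp : e p = 0) {S : Set G}
    (hS : Submonoid.closure S = ⊤)
    (hgen : ∀ g ∈ S, ∀ t, φ g (e t) = e (σ g t) - e (σ g p)) (g : G) (t : X) :
    φ g (e t) = e (σ g t) - e (σ g p) := by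
  have hg : g ∈ Submonoid.closure S := hS ▸ Submonoid.mem_top g
  induction hg using Submonoid.closure_induction generalizing t with
  | mem g hg => exact hgen g hg t
  | one => simp [hp]
  | mul g h _ _ ihg ihh =>
    simp only [map_mul, AddAut.oldMulGroup_mul_apply, Equiv.Perm.mul_apply, ihh, map_sub, ihg]
    abel

lemma cocycle_of_apply_eq_sub (he : ∀ g t, φ g (e t) = e (σ g t) - e (σ g p)) (g h : G) :
    e (σ (g * h) p) = e (σ g p) + φ g (e (σ h p)) := by
  rw [he, map_mul, Equiv.Perm.mul_apply]
  abel

end PermutationModule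

namespace DihedralGroup

variable {n : ℕ}

def toPermZMod (n : ℕ) (a : ZMod n) : DihedralGroup n →* Equiv.Perm (ZMod n) where
  toFun
    | r k => Equiv.subRight k
    | sr k => Equiv.subLeft (k + a)
  map_one' := Equiv.ext sub_zero
  map_mul' := by
    rintro (i | i) (j | j) <;> ext t <;> simp <;> ring

@[simp] lemma toPermZMod_r (a k t : ZMod n) : toPermZMod n a (r k) t = t - k := rfl

@[simp] lemma toPermZMod_sr (a k t : ZMod n) : toPermZMod n a (sr k) t = k + a - t := rfl

lemma closure_sr_zero_sr_one [NeZero n] :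
    Submonoid.closure {(sr 0 : DihedralGroup n), sr 1} = ⊤ := by
  have h0 : sr 0 ∈ Submonoid.closure {(sr 0 : DihedralGroup n), sr 1} :=
    Submonoid.subset_closure (by simp)
  have hr : ∀ k : ZMod n, r k ∈ Submonoid.closure {(sr 0 : DihedralGroup n), sr 1} := by
    intro k
    have h1 : sr 1 ∈ Submonoid.closure {(sr 0 : DihedralGroup n), sr 1} :=
      Submonoid.subset_closure (by simp)
    have hr1 : r 1 = (sr 0 : DihedralGroup n) * sr 1 := by simp
    rw [← ZMod.natCast_zmod_val k, ← r_one_pow, hr1]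
    exact pow_mem (mul_mem h0 h1) _
  refine eq_top_iff.2 fun x _ => ?_
  rcases x with k | k
  · exact hr k
  · simpa using mul_mem h0 (hr k)

end DihedralGroup

open DihedralGroup

lemma ZMod.pi_add_self_eq_zero {ι : Type*} (x : ι → ZMod 2) : x + x = 0 :=
  funext fun i => CharTwo.add_self_eq_zero (x i)

lemma ZMod.pi_sub_eq_add {ι : Type*} (x y : ι → ZMod 2) : x - y = x + y :=
  funext fun i => CharTwo.sub_eq_add (x i) (y i)

lemma ZMod.natCast_eq_neg_natCast_iff {n i m : ℕ} (h0 : 0 < i + m) (h : i + m < 2 * n) :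
    (i : ZMod n) = -(m : ZMod n) ↔ i + m = n := by
  rw [eq_neg_iff_add_eq_zero, ← Nat.cast_add, ZMod.natCast_eq_zero_iff]
  exact ⟨fun hd => Nat.eq_of_dvd_of_lt_two_mul h0.ne' hd h, fun he => he ▸ dvd_rfl⟩

section LemmaThree

variable {n : ℕ}

def eVec (n : ℕ) (t : ZMod n) : Fin (n-1) → ZMod 2 :=
  fun i => if ((i : ℕ) : ZMod n) = t then 1 else 0

lemma eVec_neg_one : eVec n (-1) = 0 := by
  funext i
  have hi := i.2
  have h : ((i : ℕ) : ZMod n) ≠ -((1 : ℕ) : ZMod n) := by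
    rw [Ne, ZMod.natCast_eq_neg_natCast_iff (by omega) (by omega)]
    omega
  simp_all [eVec]

lemma eVec_neg_two : eVec n (-2) = uVec n := by
  funext i
  have hi := i.2
  have h : ((i : ℕ) : ZMod n) = -((2 : ℕ) : ZMod n) ↔ (i : ℕ) = n - 2 := by
    rw [ZMod.natCast_eq_neg_natCast_iff (by omega) (by omega)]
    omega
  simp_all [eVec, uVec]

lemma eVec_natCast {k : ℕ} (hk : k < n - 1) : eVec n k = Pi.single ⟨k, hk⟩ 1 := by
  funext i
  have hi := i.2
  have h : ((i : ℕ) : ZMod n) = k ↔ i = ⟨k, hk⟩ := by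
    rw [ZMod.natCast_eq_natCast_iff', Nat.mod_eq_of_lt (by omega), Nat.mod_eq_of_lt (by omega),
      Fin.ext_iff]
  simp [eVec, Pi.single_apply, h]

lemma eq_neg_one_or_eq_natCast [NeZero n] (t : ZMod n) :
    t = -1 ∨ ∃ k, k < n - 1 ∧ t = k := by
  by_cases ht : t.val < n - 1
  · exact Or.inr ⟨t.val, ht, (ZMod.natCast_zmod_val t).symm⟩
  · left
    have hv : t.val + 1 = n := by have := ZMod.val_lt t; omega
    rw [eq_neg_iff_add_eq_zero, ← ZMod.natCast_zmod_val t, ← Nat.cast_one, ← Nat.cast_add, hv,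
      ZMod.natCast_self]

lemma Umat_mulVec_eVec (hn : 3 ≤ n) (t : ZMod n) :
    Umat n *ᵥ eVec n t = eVec n (-3 - t) + eVec n (-2) := by
  have : NeZero n := ⟨by omega⟩
  rcases eq_neg_one_or_eq_natCast t with rfl | ⟨k, hk, rfl⟩
  · rw [eVec_neg_one, mulVec_zero, show (-3 - -1 : ZMod n) = -2 by ring,
      ZMod.pi_add_self_eq_zero]
  funext i
  have hi := i.2
  have h2 : ((i : ℕ) : ZMod n) = -2 ↔ (i : ℕ) = n - 2 := by
    rw [← Nat.cast_two, ZMod.natCast_eq_neg_natCast_iff (by omega) (by omega)]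
    omega
  have h3 : ((i : ℕ) : ZMod n) = -3 - k ↔ (i : ℕ) + k = n - 3 := by
    rw [show (-3 - k : ZMod n) = -((3 + k : ℕ) : ZMod n) by push_cast; ring,
      ZMod.natCast_eq_neg_natCast_iff (by omega) (by omega)]
    omega
  rw [eVec_natCast hk, mulVec_single_one]
  simp only [Umat, eVec, col_apply, of_apply, Pi.add_apply, h2, h3]
  split_ifs <;> first | omega | rfl

lemma Vmat_mulVec_eVec (hn : 3 ≤ n) (t : ZMod n) : Vmat n *ᵥ eVec n t = eVec n (-2 - t) := by
  have : NeZero n := ⟨by omega⟩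
  rcases eq_neg_one_or_eq_natCast t with rfl | ⟨k, hk, rfl⟩
  · rw [eVec_neg_one, mulVec_zero, show (-2 - -1 : ZMod n) = -1 by ring, eVec_neg_one]
  funext i
  have hi := i.2
  have h2 : ((i : ℕ) : ZMod n) = -2 - k ↔ (i : ℕ) + k = n - 2 := by
    rw [show (-2 - k : ZMod n) = -((2 + k : ℕ) : ZMod n) by push_cast; ring,
      ZMod.natCast_eq_neg_natCast_iff (by omega) (by omega)]
    omega
  rw [eVec_natCast hk, mulVec_single_one]
  simp only [Vmat, eVec, col_apply, of_apply, h2]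

end LemmaThree

lemma apply_eVec_eq_sub {n : ℕ} (hn : 3 ≤ n)
    (φ : DihedralGroup n →* AddAut (Fin (n-1) → ZMod 2))
    (hφ0 : ∀ w, φ (sr 0) w = Umat n *ᵥ w) (hφ1 : ∀ w, φ (sr 1) w = Vmat n *ᵥ w)
    (g : DihedralGroup n) (t : ZMod n) :
    φ g (eVec n t) = eVec n (toPermZMod n (-3) g t) - eVec n (toPermZMod n (-3) g (-1)) := by
  have : NeZero n := ⟨by omega⟩
  refine apply_eq_sub_of_closure_eq_top _ φ _ _ eVec_neg_one closure_sr_zero_sr_one ?_ g t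
  rintro g (rfl | rfl) t
  · rw [hφ0, Umat_mulVec_eVec hn, ZMod.pi_sub_eq_add, toPermZMod_sr, toPermZMod_sr,
      show (0 + -3 - -1 : ZMod n) = -2 by ring, zero_add]
  · rw [hφ1, Vmat_mulVec_eVec hn, toPermZMod_sr, toPermZMod_sr,
      show (1 + -3 - -1 : ZMod n) = -1 by ring, eVec_neg_one, sub_zero]
    congr 1
    ring

/-- There exists an involutory group automorphism δ of G with δ(ρ0) = ρ2, δ(ρ1) = ρ1 and δ(ρ2) = ρ0; hence the associated regular 3-polytope is self-dual. -/
theorem stmt_19 (n : ℕ) (hn : 3 ≤ n)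
    (φ : DihedralGroup n →* AddAut (Fin (n-1) → ZMod 2))
    (hφ0 : ∀ w, φ (sr 0) w = (Umat n).mulVec w)
    (hφ1 : ∀ w, φ (sr 1) w = (Vmat n).mulVec w) :
    ∃ δ : MulAut (Gsd n φ), δ * δ = 1 ∧
      δ (rho0 n φ) = rho2 n φ ∧ δ (rho1 n φ) = rho1 n φ ∧ δ (rho2 n φ) = rho0 n φ := by
  let σ := toPermZMod n (-3)
  let c (g : DihedralGroup n) := Multiplicative.ofAdd (eVec n (σ g (-1)))
  have hc (x y : DihedralGroup n) : c (x * y) = c x * dihAct n φ x (c y) :=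
    congrArg Multiplicative.ofAdd <|
      cocycle_of_apply_eq_sub σ φ (eVec n) (-1) (apply_eVec_eq_sub hn φ hφ0 hφ1) x y
  have hc2 (x : DihedralGroup n) : c x * c x = 1 :=
    congrArg Multiplicative.ofAdd (ZMod.pi_add_self_eq_zero _)
  have hc_sr0 : c (sr 0) = Multiplicative.ofAdd (uVec n) := by
    simp only [c, σ, toPermZMod_sr, show (0 + -3 - -1 : ZMod n) = -2 by ring,
      eVec_neg_two]
  have hc_sr1 : c (sr 1) = 1 := by
    simp only [c, σ, toPermZMod_sr, show (1 + -3 - -1 : ZMod n) = -1 by ring,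
      eVec_neg_one]
    rfl
  refine ⟨SemidirectProduct.twistAut c hc, SemidirectProduct.twistAut_mul_self c hc hc2,
    ?_, ?_, ?_⟩ <;> ext1 <;>
    simp [rho0, rho1, rho2, hc_sr0, hc_sr1, ← ofAdd_add, ZMod.pi_add_self_eq_zero]
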